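/- arXiv:2507.02027 — 2 statements merged into one kernel-verified Lean document; each statement's English description precedes it below -/
import Mathlib

section
/- For two CPMMs with relative liquidity r ≥ 1, the instantaneous LVR per unit of pool value satisfies ℓ(σ,Q)/V(Q) = (σ²/8)(1 − 1/r), where V(Q) = Q·x*(Q) + y*(Q) = 2K√Q is the value of the less liquid pool. -/
/-- For two CPMMs with relative liquidity r ≥ 1, the instantaneous LVR per
unit of pool value is ℓ(σ,Q)/V(Q) = (σ²/8)(1 − 1/r), where V(Q) = Q·x*(Q) + y*(Q) = 2K√Q. -/
theorem lvr_per_unit_value_two_cpmms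
    (σ K r Q : ℝ) (hσ : 0 < σ) (hK : 0 < K) (hr : 1 ≤ r) (hQ : 0 < Q)
    (ℓ V : ℝ)
    (hℓ : ℓ = σ ^ 2 * Q ^ 2 / 2 * (1 - 1 / r) * (K / (2 * Q ^ ((3 : ℝ) / 2))))
    (hV : V = Q * (K / Real.sqrt Q) + K * Real.sqrt Q) :
    V = 2 * K * Real.sqrt Q ∧ ℓ / V = σ ^ 2 / 8 * (1 - 1 / r) := by
  have hs : 0 < Real.sqrt Q := Real.sqrt_pos.mpr hQ
  have hsq : Real.sqrt Q * Real.sqrt Q = Q := Real.mul_self_sqrt hQ.le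
  have hQ32 : Q ^ ((3 : ℝ) / 2) = Q * Real.sqrt Q := by
    have h := Real.rpow_add hQ 1 (1 / 2)
    rw [Real.rpow_one, ← Real.sqrt_eq_rpow] at h
    norm_num at h
    exact h
  have hVeq : V = 2 * K * Real.sqrt Q := by
    rw [hV, mul_comm Q (K / Real.sqrt Q), div_mul_eq_mul_div, mul_div_assoc,
      Real.div_sqrt]
    ring
  refine ⟨hVeq, ?_⟩
  rw [hℓ, hVeq, hQ32]
  field_simp
  ring_nf
  rw [show Real.sqrt Q ^ 2 = Q from by rw [sq, hsq]]
  ring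
end

section
/- Let Q_t be a GBM with dQ_t = σ Q_t dB_t and let x*(Q) = K/√Q. Then the expected instantaneous LVR rate against an r-times more liquid CPMM satisfies E[ℓ(σ, Q_t, r)] = (σ²K/4)(1 − 1/r)·E[√Q_t] = (σ²K/4)(1 − 1/r)·√Q_0·e^{−σ²t/8}. -/
open MeasureTheory ProbabilityTheory

/-- A standard one-dimensional Brownian motion. -/
def IsBrownianMotion {Ω : Type*} [MeasurableSpace Ω] (μ : Measure Ω) (B : ℝ → Ω → ℝ) : Prop :=
  (∀ t, Measurable (B t)) ∧
  (∀ᵐ ω ∂μ, B 0 ω = 0) ∧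
  (∀ᵐ ω ∂μ, Continuous fun t => B t ω) ∧
  (∀ s t : ℝ, 0 ≤ s → s ≤ t →
    Measure.map (fun ω => B t ω - B s ω) μ = gaussianReal 0 (Real.toNNReal (t - s))) ∧
  (∀ n : ℕ, ∀ t : ℕ → ℝ, Monotone t → 0 ≤ t 0 →
    iIndepFun
      (fun i : Fin n => fun ω => B (t (i + 1)) ω - B (t i) ω) μ)

/-- The instantaneous LVR rate for two CPMMs with relative liquidity r:
ℓ(σ,Q,r) = (σ²Q²/2)(1 − 1/r)·K/(2Q^{3/2}). -/
noncomputable def lvrRateCPMM (σ K r q : ℝ) : ℝ :=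
  σ ^ 2 * q ^ 2 / 2 * (1 - 1 / r) * (K / (2 * q ^ ((3 : ℝ) / 2)))

/-! The rate `ℓ(σ, q, r)` is a constant multiple of `√q`, and
`√Q_t = √Q₀ · e^{-σ²t/4} · e^{(σ/2) B_t}` with `B_t ~ N(0, t)`, so `E[√Q_t]` is read off the
Gaussian moment generating function `E[e^{λ B_t}] = e^{λ² t / 2}` at `λ = σ/2`. -/

open Real

theorem lvrRateCPMM_eq_mul_sqrt (σ K r : ℝ) {q : ℝ} (hq : 0 ≤ q) :
    lvrRateCPMM σ K r q = σ ^ 2 * K / 4 * (1 - 1 / r) * √q := by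
  rcases hq.eq_or_lt with rfl | hq
  · simp [lvrRateCPMM]
  have hq2 : q ^ 2 = q ^ ((3 : ℝ) / 2) * √q := by
    rw [sqrt_eq_rpow, ← rpow_add hq, ← rpow_natCast]
    norm_num
  have hq32 : q ^ ((3 : ℝ) / 2) ≠ 0 := (rpow_pos_of_pos hq _).ne'
  rw [lvrRateCPMM, hq2]
  field_simp
  ring

theorem integral_sqrt_mul_exp_of_map_eq_gaussianReal {Ω : Type*} [MeasurableSpace Ω] {μ : Measure Ω}
    {X : Ω → ℝ} {v : NNReal} (hX : μ.map X = gaussianReal 0 v) (σ : ℝ) {Q₀ : ℝ} (hQ₀ : 0 ≤ Q₀) :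
    ∫ ω, √(Q₀ * exp (σ * X ω - σ ^ 2 * v / 2)) ∂μ = √Q₀ * exp (-σ ^ 2 * v / 8) := by
  have hsqrt : ∀ ω, √(Q₀ * exp (σ * X ω - σ ^ 2 * v / 2))
      = √Q₀ * exp (-σ ^ 2 * v / 4) * exp (σ / 2 * X ω) := fun ω => by
    rw [sqrt_mul hQ₀, ← exp_half, mul_assoc, ← exp_add]
    ring_nf
  simp_rw [hsqrt]
  rw [integral_const_mul, ← mgf, mgf_gaussianReal hX, mul_assoc, ← exp_add]
  ring_nf

theorem IsBrownianMotion.map_eq_gaussianReal {Ω : Type*} [MeasurableSpace Ω] {μ : Measure Ω}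
    {B : ℝ → Ω → ℝ} (hB : IsBrownianMotion μ B) {t : ℝ} (ht : 0 ≤ t) :
    μ.map (B t) = gaussianReal 0 t.toNNReal := by
  obtain ⟨-, hB0, -, hincr, -⟩ := hB
  have hBt : B t =ᵐ[μ] fun ω => B t ω - B 0 ω := hB0.mono fun ω h => by simp [h]
  rw [Measure.map_congr hBt, hincr 0 t le_rfl ht, sub_zero]

theorem expected_lvr_rate_gbm_general
    {Ω : Type*} [MeasurableSpace Ω] (μ : Measure Ω)
    (B : ℝ → Ω → ℝ) (hB : IsBrownianMotion μ B)
    (σ Q₀ K r : ℝ) (hQ₀ : 0 < Q₀)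
    (Q : ℝ → Ω → ℝ)
    (hQ : ∀ t ω, Q t ω = Q₀ * Real.exp (σ * B t ω - σ ^ 2 * t / 2))
    (t : ℝ) (ht : 0 ≤ t) :
    (∫ ω, lvrRateCPMM σ K r (Q t ω) ∂μ)
        = σ ^ 2 * K / 4 * (1 - 1 / r) * ∫ ω, Real.sqrt (Q t ω) ∂μ ∧
    (∫ ω, lvrRateCPMM σ K r (Q t ω) ∂μ)
        = σ ^ 2 * K / 4 * (1 - 1 / r) * Real.sqrt Q₀ * Real.exp (-σ ^ 2 * t / 8) := by
  have hQt : Q t = fun ω => Q₀ * exp (σ * B t ω - σ ^ 2 * t.toNNReal / 2) := by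
    ext ω
    rw [hQ, coe_toNNReal t ht]
  have hlvr : (∫ ω, lvrRateCPMM σ K r (Q t ω) ∂μ)
      = σ ^ 2 * K / 4 * (1 - 1 / r) * ∫ ω, √(Q t ω) ∂μ := by
    have hQt_nonneg : ∀ ω, 0 ≤ Q t ω := fun ω => by rw [hQ]; positivity
    simp_rw [fun ω => lvrRateCPMM_eq_mul_sqrt σ K r (hQt_nonneg ω)]
    exact integral_const_mul _ _
  refine ⟨hlvr, ?_⟩
  rw [hlvr, hQt, integral_sqrt_mul_exp_of_map_eq_gaussianReal (hB.map_eq_gaussianReal ht) σ hQ₀.le,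
    coe_toNNReal t ht]
  ring

/-- For the driftless GBM Q_t = Q₀ exp(σB_t − σ²t/2) and x*(Q) = K/√Q, the
expected instantaneous LVR rate against an r-times more liquid CPMM is
E[ℓ(σ,Q_t,r)] = (σ²K/4)(1 − 1/r)·E[√Q_t] = (σ²K/4)(1 − 1/r)·√Q₀·e^{−σ²t/8}. -/
theorem expected_lvr_rate_gbm
    {Ω : Type*} [MeasurableSpace Ω] (μ : Measure Ω) [IsProbabilityMeasure μ]
    (B : ℝ → Ω → ℝ) (hB : IsBrownianMotion μ B)
    (σ Q₀ K r : ℝ) (hσ : 0 < σ) (hQ₀ : 0 < Q₀) (hK : 0 < K) (hr : 1 ≤ r)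
    (Q : ℝ → Ω → ℝ)
    (hQ : ∀ t ω, Q t ω = Q₀ * Real.exp (σ * B t ω - σ ^ 2 * t / 2))
    (t : ℝ) (ht : 0 ≤ t) :
    (∫ ω, lvrRateCPMM σ K r (Q t ω) ∂μ)
        = σ ^ 2 * K / 4 * (1 - 1 / r) * ∫ ω, Real.sqrt (Q t ω) ∂μ ∧
    (∫ ω, lvrRateCPMM σ K r (Q t ω) ∂μ)
        = σ ^ 2 * K / 4 * (1 - 1 / r) * Real.sqrt Q₀ * Real.exp (-σ ^ 2 * t / 8) :=
  expected_lvr_rate_gbm_general μ B hB σ Q₀ K r hQ₀ Q hQ t ht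
end
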